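/- Let {U_ε : ε ∈ (0,1]} be a family of perturbed four-corner quantum walks and fix θ ∈ ℂ with Im θ < 0. Then there exist ε₀ > 0 and r > 0 such that for every ε ∈ (0, ε₀] and every k ∈ {0, 1, …, 2(m₀+n₀)−1} there exist κ⁺_{k,ε}, κ⁻_{k,ε} ∈ ℂ with Im κ^±_{k,ε} > Im θ, with |κ^±_{k,ε} − πk/(m₀+n₀)| < rε (distance taken modulo 2π), such that e^{−iκ⁺_{k,ε}} and e^{−iκ⁻_{k,ε}} are eigenvalues of the complex-translated operator U_ε(θ). In particular U_ε(θ) has 4(m₀+n₀) eigenvalues counted with multiplicity, as does U_el. -/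

import Mathlib

/-!
For `l = e^{-iκ}` with `l^{2(m₀+n₀)} = c⁺` the walk `U_ε = S C_ε` has an explicit outgoing
solution of `U_ε u = l u`: a wave running around the loop `Φ₊` through the four corners, which
picks up one coin entry per corner and returns to its initial value because `l^{2(m₀+n₀)} = c⁺`,
together with geometric tails leaking out of the corners along the lines through them (the
vanishing entries of `C_ε` rule out every other leak). Since `S D(θ) = e^{iθ} D(θ) S`, the
vector `v = D(θ) u` solves `U_ε(θ) v = l v`, and it is square summable as soon as `Im θ < Im κ`,
because the tails then decay exponentially. Reflecting the lattice in the diagonal exchanges `Φ₊`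
and `Φ₋`, hence `c⁺` and `c⁻`. Finally `c^± = 1 + O(ε)`, so the `2(m₀+n₀)` solutions
`κ = (πk + i log(c^±)/2)/(m₀+n₀)` lie within `O(ε)` of `πk/(m₀+n₀)` and above `Im θ`.
-/

noncomputable section

namespace QWPaper

open Complex

/-- Sites of the two-dimensional lattice. -/
abbrev Site : Type := ℤ × ℤ

/-- Chirality indices: `0 = ←`, `1 = →`, `2 = ↓`, `3 = ↑`. -/
abbrev Chir : Type := Fin 4

abbrev V : Type := EuclideanSpace ℂ (Fin 4)

/-- The Hilbert space `H = ℓ²(ℤ²; ℂ⁴)`. -/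
abbrev H : Type := lp (fun _ : Site => V) 2

/-- The inner domain `Ω^i = {x : |x₁| ≤ M₀, |x₂| ≤ M₀}`. -/
def innerDom (M₀ : ℤ) : Set Site := {x | |x.1| ≤ M₀ ∧ |x.2| ≤ M₀}

/-- `S` is the shift operator:
`(Su)(x) = (u_←(x+e₁), u_→(x−e₁), u_↓(x+e₂), u_↑(x−e₂))`. -/
def IsShiftOp (S : H →L[ℂ] H) : Prop :=
  ∀ (u : H) (x : Site),
    (S u) x 0 = u (x.1 + 1, x.2) 0 ∧
    (S u) x 1 = u (x.1 - 1, x.2) 1 ∧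
    (S u) x 2 = u (x.1, x.2 + 1) 2 ∧
    (S u) x 3 = u (x.1, x.2 - 1) 3

/-- `A` is the bounded operator of pointwise multiplication by the matrix family `C`. -/
def IsCoinOp (A : H →L[ℂ] H) (C : Site → Matrix Chir Chir ℂ) : Prop :=
  ∀ (u : H) (x : Site) (i : Chir), (A u) x i = ∑ j : Chir, C x i j * u x j

/-- Every coin matrix is unitary. -/
def IsUnitaryCoin (C : Site → Matrix Chir Chir ℂ) : Prop :=
  ∀ x, C x ∈ Matrix.unitaryGroup Chir ℂ

/-- Assumption (A-1): `C(x) = I₄` off `Ω^i`, with `M₀ ≥ 1`. -/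
def SatisfiesA1 (C : Site → Matrix Chir Chir ℂ) (M₀ : ℤ) : Prop :=
  1 ≤ M₀ ∧ ∀ x, x ∉ innerDom M₀ → C x = 1

/-- `D_x(θ) = diag(e^{iθx₁}, e^{−iθx₁}, e^{iθx₂}, e^{−iθx₂})`. -/
def Dmat (θ : ℂ) (x : Site) : Matrix Chir Chir ℂ :=
  Matrix.diagonal ![Complex.exp (Complex.I * θ * x.1), Complex.exp (-(Complex.I * θ * x.1)),
    Complex.exp (Complex.I * θ * x.2), Complex.exp (-(Complex.I * θ * x.2))]

/-- The translated coin `D_x(θ) C(x) D_x(θ)⁻¹`. -/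
def transCoin (θ : ℂ) (C : Site → Matrix Chir Chir ℂ) (x : Site) : Matrix Chir Chir ℂ :=
  Dmat θ x * C x * (Dmat θ x)⁻¹

/-- The complex translated walk `U(θ) = e^{−iθ} S M(θ)`. -/
def transWalkOp (θ : ℂ) (S Mθ : H →L[ℂ] H) : H →L[ℂ] H :=
  Complex.exp (-(Complex.I * θ)) • (S.comp Mθ)

/-- `⟨x⟩ = (1 + |x|²)^{1/2}`. -/
def jnorm (x : Site) : ℝ := Real.sqrt (1 + ((x.1 : ℝ) ^ 2 + (x.2 : ℝ) ^ 2))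

/-- Super-exponentially decreasing elements of `H`: `e^{τ⟨x⟩} f ∈ H` for every `τ > 0`. -/
def SuperExpDecay (f : H) : Prop :=
  ∀ τ : ℝ, 0 < τ → Memℓp (fun x : Site => (Real.exp (τ * jnorm x) • f x : V)) 2

/-- Pointwise shift of an arbitrary `ℂ⁴`-valued map on `ℤ²`. -/
def ptShift (v : Site → Chir → ℂ) (x : Site) : Chir → ℂ :=
  ![v (x.1 + 1, x.2) 0, v (x.1 - 1, x.2) 1, v (x.1, x.2 + 1) 2, v (x.1, x.2 - 1) 3]

/-- Pointwise coin action on an arbitrary `ℂ⁴`-valued map on `ℤ²`. -/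
def ptCoin (C : Site → Matrix Chir Chir ℂ) (u : Site → Chir → ℂ) (x : Site) (i : Chir) : ℂ :=
  ∑ j : Chir, C x i j * u x j

/-- Pointwise action of the walk `U = SC` on arbitrary `ℂ⁴`-valued maps. -/
def ptWalk (C : Site → Matrix Chir Chir ℂ) (u : Site → Chir → ℂ) : Site → Chir → ℂ :=
  ptShift (ptCoin C u)

/-- `u` is a pointwise solution of `U u = e^{−iκ} u`. -/
def IsPtSolution (C : Site → Matrix Chir Chir ℂ) (κ : ℂ) (u : Site → Chir → ℂ) : Prop :=
  ∀ (x : Site) (i : Chir), ptWalk C u x i = Complex.exp (-(Complex.I * κ)) * u x i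

/-- `u` is outgoing with the explicit sequences `aL aR aD aU`. -/
def IsOutgoingWith (M₀ : ℤ) (κ : ℂ) (aL aR aD aU : ℤ → ℂ) (u : Site → Chir → ℂ) : Prop :=
  (∀ x : Site, x.1 < -M₀ → u x 0 = aL x.2 * Complex.exp (-(Complex.I * κ * x.1))) ∧
  (∀ x : Site, M₀ < x.1 → u x 0 = 0) ∧
  (∀ x : Site, x.1 < -M₀ → u x 1 = 0) ∧
  (∀ x : Site, M₀ < x.1 → u x 1 = aR x.2 * Complex.exp (Complex.I * κ * x.1)) ∧
  (∀ x : Site, x.2 < -M₀ → u x 2 = aD x.1 * Complex.exp (-(Complex.I * κ * x.2))) ∧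
  (∀ x : Site, M₀ < x.2 → u x 2 = 0) ∧
  (∀ x : Site, x.2 < -M₀ → u x 3 = 0) ∧
  (∀ x : Site, M₀ < x.2 → u x 3 = aU x.1 * Complex.exp (Complex.I * κ * x.2))

/-- `u` is an outgoing map. -/
def IsOutgoing (M₀ : ℤ) (κ : ℂ) (u : Site → Chir → ℂ) : Prop :=
  ∃ aL aR aD aU : ℤ → ℂ, IsOutgoingWith M₀ κ aL aR aD aU u

/-- Elastic coin: column `j` of `C_el(x)` is `e^{iα_j(x)} 𝐞_{σ(x)(j)}`. -/
def elasticCoin (σ : Site → Equiv.Perm Chir) (α : Site → Chir → ℝ) (x : Site) :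
    Matrix Chir Chir ℂ :=
  Matrix.of fun i j => if i = σ x j then Complex.exp (Complex.I * (α x j : ℂ)) else 0

/-- The initial state `δ_y 𝐞_j ∈ H`. -/
def deltaState (y : Site) (j : Chir) : H := lp.single 2 y (EuclideanSpace.single j 1)

/-- `(q, p)` is the trajectory map of the elastic walk `Uel`:
`Uel^t (δ_y 𝐞_j)` is a modulus-one multiple of `δ_{q(t,y,j)} 𝐞_{p(t,y,j)}`. -/
def IsTrajectory (Uel : unitary (H →L[ℂ] H))
    (q : ℤ → Site → Chir → Site) (p : ℤ → Site → Chir → Chir) : Prop :=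
  (∀ y j, q 0 y j = y ∧ p 0 y j = j) ∧
  ∀ (t : ℤ) (y : Site) (j : Chir), ∃ c : ℂ, ‖c‖ = 1 ∧
    ((Uel ^ t : unitary (H →L[ℂ] H)) : H →L[ℂ] H) (deltaState y j)
      = c • deltaState (q t y j) (p t y j)

/-- Euclidean norm of a lattice point. -/
def znorm (x : Site) : ℝ := Real.sqrt ((x.1 : ℝ) ^ 2 + (x.2 : ℝ) ^ 2)

/-- The parts of the barrier `K`. -/
def K1p (M₀ : ℤ) : Set Site := {x | x.1 = M₀ ∧ |x.2| ≤ M₀}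
def K1m (M₀ : ℤ) : Set Site := {x | x.1 = -M₀ ∧ |x.2| ≤ M₀}
def K2p (M₀ : ℤ) : Set Site := {x | x.2 = M₀ ∧ |x.1| ≤ M₀}
def K2m (M₀ : ℤ) : Set Site := {x | x.2 = -M₀ ∧ |x.1| ≤ M₀}
def Kbar (M₀ : ℤ) : Set Site := K1p M₀ ∪ K1m M₀ ∪ K2p M₀ ∪ K2m M₀

/-- The exterior domain `Ω^e = (ℤ² \ Ω^i) ∪ K`. -/
def outerDom (M₀ : ℤ) : Set Site := {x | x ∉ innerDom M₀} ∪ Kbar M₀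

/-- Membership in the interior space `H_i`. -/
def memHi (M₀ : ℤ) (u : H) : Prop :=
  (∀ x, x ∉ innerDom M₀ → ∀ i : Chir, u x i = 0) ∧
  (∀ x ∈ K1p M₀, u x 0 = 0) ∧ (∀ x ∈ K1m M₀, u x 1 = 0) ∧
  (∀ x ∈ K2p M₀, u x 2 = 0) ∧ (∀ x ∈ K2m M₀, u x 3 = 0)

/-- Membership in the exterior space `H_e`. -/
def memHe (M₀ : ℤ) (u : H) : Prop :=
  (∀ x, x ∉ outerDom M₀ → ∀ i : Chir, u x i = 0) ∧
  (∀ x ∈ K1m M₀ ∪ K2p M₀ ∪ K2m M₀, u x 0 = 0) ∧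
  (∀ x ∈ K1p M₀ ∪ K2p M₀ ∪ K2m M₀, u x 1 = 0) ∧
  (∀ x ∈ K2m M₀ ∪ K1p M₀ ∪ K1m M₀, u x 2 = 0) ∧
  (∀ x ∈ K2p M₀ ∪ K1p M₀ ∪ K1m M₀, u x 3 = 0)

/-- The non-penetrable barrier conditions for `U_np`. -/
def IsBarrierWalk (M₀ : ℤ) (Unp : H →L[ℂ] H) : Prop :=
  ∀ u : H,
    (∀ x ∈ K1p M₀, (Unp u) (x.1 + 1, x.2) 1 = u x 0) ∧
    (∀ x ∈ K1m M₀, (Unp u) (x.1 - 1, x.2) 0 = u x 0) ∧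
    (∀ x ∈ K2p M₀, (Unp u) (x.1, x.2 + 1) 3 = u x 2) ∧
    (∀ x ∈ K2m M₀, (Unp u) (x.1, x.2 - 1) 2 = u x 3)

/-- The rectangular loop `L_{ε,s}(μ)` (boundary of the rectangle with half-widths `a`, `b`). -/
def loopSet (μ a b : ℝ) : Set ℂ :=
  {κ | |κ.re - μ| ≤ a ∧ |κ.im| ≤ b ∧ (|κ.re - μ| = a ∨ |κ.im| = b)}

/-- The four-corner elastic coin. -/
def fourCornerCoin (m₀ n₀ : ℤ) (x : Site) : Matrix Chir Chir ℂ :=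
  if x = ((0 : ℤ), (0 : ℤ)) then !![0,1,0,0; 0,0,1,0; 0,0,0,1; 1,0,0,0]
  else if x = (m₀, (0 : ℤ)) then !![0,0,1,0; 1,0,0,0; 0,0,0,1; 0,1,0,0]
  else if x = (m₀, n₀) then !![0,0,0,1; 1,0,0,0; 0,1,0,0; 0,0,1,0]
  else if x = ((0 : ℤ), n₀) then !![0,1,0,0; 0,0,0,1; 1,0,0,0; 0,0,1,0]
  else 1

/-- The four corners. -/
def corners (m₀ n₀ : ℤ) : Set Site :=
  {((0 : ℤ), (0 : ℤ)), (m₀, (0 : ℤ)), (m₀, n₀), ((0 : ℤ), n₀)}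

/-- A perturbed four-corner coin `C_ε`. -/
def IsPerturbedFourCorner (m₀ n₀ : ℤ) (ε : ℝ) (Cε : Site → Matrix Chir Chir ℂ) : Prop :=
  IsUnitaryCoin Cε ∧
  (∀ x, x ∉ corners m₀ n₀ → Cε x = 1) ∧
  (∀ x ∈ corners m₀ n₀, ∀ i j : Chir, ‖Cε x i j - fourCornerCoin m₀ n₀ x i j‖ < ε) ∧
  Cε ((0 : ℤ), (0 : ℤ)) 1 0 = 0 ∧ Cε ((0 : ℤ), (0 : ℤ)) 3 2 = 0 ∧
  Cε (m₀, (0 : ℤ)) 3 2 = 0 ∧ Cε (m₀, (0 : ℤ)) 0 1 = 0 ∧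
  Cε (m₀, n₀) 2 3 = 0 ∧ Cε (m₀, n₀) 0 1 = 0 ∧
  Cε ((0 : ℤ), n₀) 1 0 = 0 ∧ Cε ((0 : ℤ), n₀) 2 3 = 0

/-- `c_ε⁺ = c_{↑,←}(0,0) c_{←,↓}(m₀,0) c_{↓,→}(m₀,n₀) c_{→,↑}(0,n₀)`. -/
def cPlus (m₀ n₀ : ℤ) (Cε : Site → Matrix Chir Chir ℂ) : ℂ :=
  Cε ((0 : ℤ), (0 : ℤ)) 3 0 * Cε (m₀, (0 : ℤ)) 0 2 * Cε (m₀, n₀) 2 1 * Cε ((0 : ℤ), n₀) 1 3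

/-- `c_ε⁻ = c_{→,↓}(0,0) c_{↑,→}(m₀,0) c_{←,↑}(m₀,n₀) c_{↓,←}(0,n₀)`. -/
def cMinus (m₀ n₀ : ℤ) (Cε : Site → Matrix Chir Chir ℂ) : ℂ :=
  Cε ((0 : ℤ), (0 : ℤ)) 1 2 * Cε (m₀, (0 : ℤ)) 3 1 * Cε (m₀, n₀) 0 3 * Cε ((0 : ℤ), n₀) 2 0

/-- `u ∈ H` is supported on the set `A ⊆ ℤ² × {←,→,↓,↑}`. -/
def SupportedOn (u : H) (A : Set (Site × Chir)) : Prop :=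
  ∀ (x : Site) (i : Chir), (x, i) ∉ A → u x i = 0

/-- The image of the closed trajectory `Φ₊` of the four-corner walk. -/
def imPhiPlus (m₀ n₀ : ℤ) : Set (Site × Chir) :=
  {w | ∃ t : ℤ, 1 ≤ t ∧ t ≤ n₀ ∧ w = (((0 : ℤ), t), (3 : Chir))} ∪
  {w | ∃ t : ℤ, 1 ≤ t ∧ t ≤ m₀ ∧ w = ((t, n₀), (1 : Chir))} ∪
  {w | ∃ t : ℤ, 0 ≤ t ∧ t ≤ n₀ - 1 ∧ w = ((m₀, t), (2 : Chir))} ∪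
  {w | ∃ t : ℤ, 0 ≤ t ∧ t ≤ m₀ - 1 ∧ w = ((t, (0 : ℤ)), (0 : Chir))}

/-- The image of the reversed closed trajectory `Φ₋` of the four-corner walk. -/
def imPhiMinus (m₀ n₀ : ℤ) : Set (Site × Chir) :=
  {w | ∃ t : ℤ, 1 ≤ t ∧ t ≤ m₀ ∧ w = ((t, (0 : ℤ)), (1 : Chir))} ∪
  {w | ∃ t : ℤ, 1 ≤ t ∧ t ≤ n₀ ∧ w = ((m₀, t), (3 : Chir))} ∪
  {w | ∃ t : ℤ, 0 ≤ t ∧ t ≤ m₀ - 1 ∧ w = ((t, n₀), (0 : Chir))} ∪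
  {w | ∃ t : ℤ, 0 ≤ t ∧ t ≤ n₀ - 1 ∧ w = (((0 : ℤ), t), (2 : Chir))}

/-- The eight outgoing tails starting from the four corners. -/
def tails (m₀ n₀ : ℤ) : Set (Site × Chir) :=
  {w | ∃ N y₂ : ℤ, 1 ≤ N ∧ (y₂ = 0 ∨ y₂ = n₀) ∧ w = ((-N, y₂), (0 : Chir))} ∪
  {w | ∃ N y₁ : ℤ, 1 ≤ N ∧ (y₁ = 0 ∨ y₁ = m₀) ∧ w = ((y₁, n₀ + N), (3 : Chir))} ∪
  {w | ∃ N y₁ : ℤ, 1 ≤ N ∧ (y₁ = 0 ∨ y₁ = m₀) ∧ w = ((y₁, -N), (2 : Chir))} ∪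
  {w | ∃ N y₂ : ℤ, 1 ≤ N ∧ (y₂ = 0 ∨ y₂ = n₀) ∧ w = ((m₀ + N, y₂), (1 : Chir))}

/-- The shape resonance perturbation `C_ε` of the barrier coin `C_np`. -/
def IsShapePerturbation (M₀ : ℤ) (Cnp : Site → Matrix Chir Chir ℂ) (ε : ℝ)
    (Cε : Site → Matrix Chir Chir ℂ) : Prop :=
  IsUnitaryCoin Cε ∧ (∀ x, x ∉ Kbar M₀ → Cε x = Cnp x) ∧
  (∀ x ∈ Kbar M₀, ∀ i j : Chir, ‖Cε x i j - Cnp x i j‖ < ε)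

/-- Counterclockwise contour integral of an operator-valued map over the boundary of the
rectangle centered at `μ ∈ ℝ` with half-widths `a` and `b`. -/
def rectIntegral (f : ℂ → (H →L[ℂ] H)) (μ a b : ℝ) : H →L[ℂ] H :=
  ((∫ t in (μ - a)..(μ + a), f (t - b * Complex.I)) -
      (∫ t in (μ - a)..(μ + a), f (t + b * Complex.I))) +
  Complex.I • ((∫ s in (-b)..b, f ((μ + a : ℝ) + s * Complex.I)) -
      (∫ s in (-b)..b, f ((μ - a : ℝ) + s * Complex.I)))

/-- The Riesz-type projection `(1/2π) ∮ e^{−iκ} (A − e^{−iκ})^{−1} dκ` over the rectangular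
loop of half-widths `a`, `b` around `μ`. -/
def rieszProj (A : H →L[ℂ] H) (μ a b : ℝ) : H →L[ℂ] H :=
  (1 / (2 * Real.pi)) •
    rectIntegral (fun κ => Complex.exp (-(Complex.I * κ)) •
      Ring.inverse (A - Complex.exp (-(Complex.I * κ)) • (1 : H →L[ℂ] H))) μ a b

lemma memℓp_of_comp_injective {α β E : Type*} [NormedAddCommGroup E] {p : ENNReal}
    (hp : 0 < p.toReal) {F : α → E} {g : β → α} (hg : g.Injective)
    (hF : ∀ x ∉ Set.range g, F x = 0) (h : Memℓp (F ∘ g) p) : Memℓp F p := by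
  rw [memℓp_gen_iff hp] at h ⊢
  exact (hg.summable_iff fun x hx => by simp [hF x hx, Real.zero_rpow hp.ne']).mp h

lemma memℓp_comp_equiv {α β E : Type*} [NormedAddCommGroup E] {p : ENNReal} (hp : 0 < p.toReal)
    {f : α → E} (e : β ≃ α) (hf : Memℓp f p) : Memℓp (f ∘ e) p :=
  memℓp_of_comp_injective hp e.symm.injective (fun x hx => absurd ⟨e x, by simp⟩ hx)
    (by simpa [Function.comp_def] using hf)

lemma memℓp_row {α β E : Type*} [NormedAddCommGroup E] [DecidableEq β] {p : ENNReal}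
    (hp : 0 < p.toReal) {f : α → E} (hf : Memℓp f p) (b : β) :
    Memℓp (fun x : α × β => if x.2 = b then f x.1 else 0) p :=
  memℓp_of_comp_injective (g := fun a => (a, b)) hp (fun s t h => by simpa using h)
    (fun x hx => if_neg fun h => hx ⟨x.1, by rw [← h]⟩) (by simpa [Function.comp_def] using hf)

lemma memℓp_of_rows {α β E : Type*} [NormedAddCommGroup E] {p : ENNReal} (hp : 0 < p.toReal)
    {F : α × β → E} (s : Finset β) (hF : ∀ x, x.2 ∉ s → F x = 0)
    (hrow : ∀ b ∈ s, Memℓp (fun a => F (a, b)) p) : Memℓp F p := by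
  classical
  refine (Memℓp.finsetSum s fun b hb => (memℓp_row hp (hrow b hb) b).norm).mono fun x => ?_
  by_cases hx : x.2 ∈ s
  · refine le_trans (le_of_eq ?_) (Finset.single_le_sum (fun b _ => norm_nonneg _) hx)
    simp
  · simp [hF x hx, Finset.sum_nonneg]

lemma memℓp_of_cols {α β E : Type*} [NormedAddCommGroup E] {p : ENNReal} (hp : 0 < p.toReal)
    {F : α × β → E} (s : Finset α) (hF : ∀ x, x.1 ∉ s → F x = 0)
    (hcol : ∀ a ∈ s, Memℓp (fun b => F (a, b)) p) : Memℓp F p := by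
  simpa [Function.comp_def] using memℓp_comp_equiv hp (Equiv.prodComm α β)
    (memℓp_of_rows hp (F := F ∘ Prod.swap) s (fun x hx => hF _ hx) hcol)

lemma norm_toLp_two_le_sum {ι : Type*} [Fintype ι] (v : ι → ℂ) :
    ‖(WithLp.toLp 2 v : EuclideanSpace ℂ ι)‖ ≤ ∑ i, ‖v i‖ := by
  rw [EuclideanSpace.norm_eq]
  exact Real.sqrt_le_iff.mpr ⟨by positivity,
    Finset.sum_sq_le_sq_sum_of_nonneg fun i _ => norm_nonneg _⟩

lemma memℓp_toLp_of_forall {α ι : Type*} [Fintype ι] {p : ENNReal} {w : α → ι → ℂ}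
    (hw : ∀ i, Memℓp (fun a => w a i) p) :
    Memℓp (fun a => (WithLp.toLp 2 (w a) : EuclideanSpace ℂ ι)) p :=
  (Memℓp.finsetSum Finset.univ fun i _ => (hw i).norm).mono fun a => by
    simpa [Finset.sum_apply] using norm_toLp_two_le_sum (w a)

lemma summable_zpow_of_le {ρ : ℝ} (hρ : 1 < ρ) (N : ℤ) :
    Summable fun t : ℤ => if t ≤ N then ρ ^ t else 0 := by
  refine Summable.of_nat_of_neg ?_ ?_
  · refine summable_of_ne_finset_zero (s := Finset.range (N.toNat + 1)) fun n hn => ?_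
    rw [Finset.mem_range, not_lt] at hn
    rw [if_neg (by omega)]
  · refine Summable.of_nonneg_of_le (fun n => ?_) (fun n => ?_)
      (summable_geometric_of_lt_one (inv_nonneg.mpr (by linarith)) (inv_lt_one_of_one_lt₀ hρ))
    · split_ifs <;> positivity
    · split_ifs
      · simp [zpow_neg, inv_pow]
      · positivity

lemma memℓp_zpow_of_le {ρ : ℝ} (hρ : 1 < ρ) (N : ℤ) :
    Memℓp (fun t : ℤ => if t ≤ N then ρ ^ t else 0) 2 := by
  refine memℓp_gen ((summable_zpow_of_le (one_lt_pow₀ hρ two_ne_zero) N).congr fun t => ?_)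
  split_ifs
  · rw [Real.norm_of_nonneg (zpow_pos (by linarith) t).le, ENNReal.toReal_ofNat, Real.rpow_two,
      ← zpow_natCast, ← zpow_mul, ← zpow_natCast, ← zpow_mul, mul_comm]
  · simp

/-- The profile of the resonant state along one line, parametrised so that the wave travels
towards `t = -∞`: it starts at `hi`, and its amplitude changes from `c` to `d` once it has passed
the corner at `mid`. -/
def ray (l : ℂ) (hi mid : ℤ) (c d : ℂ) (t : ℤ) : ℂ :=
  if t ≤ hi then l ^ t * (if mid ≤ t then c else d) else 0

section Ray

variable {l : ℂ} {hi mid : ℤ} {c d : ℂ}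

lemma ray_of_le_of_le {t : ℤ} (h : t ≤ hi) (h' : mid ≤ t) : ray l hi mid c d t = l ^ t * c := by
  rw [ray, if_pos h, if_pos h']

lemma ray_eq_mul_ray {s t : ℤ} (hl : l ≠ 0) (hst : s + 1 = t) (hmid : t ≠ mid)
    (hhi : t ≠ hi + 1) : ray l hi mid c d t = l * ray l hi mid c d s := by
  subst hst
  unfold ray
  rw [zpow_add_one₀ hl]
  split_ifs <;> first | omega | ring

lemma memℓp_mul_ray {w : ℤ → ℂ} {s : ℝ} (hw : ∀ t, ‖w t‖ = s ^ t) (hρ : 1 < s * ‖l‖) :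
    Memℓp (fun t => w t * ray l hi mid c d t) 2 := by
  have hs : 0 ≤ s := by simpa [hw 1] using norm_nonneg (w 1)
  refine ((memℓp_zpow_of_le hρ hi).const_mul (max ‖c‖ ‖d‖)).mono fun t => ?_
  have hst : 0 ≤ s ^ t * ‖l‖ ^ t := mul_nonneg (zpow_nonneg hs t) (zpow_nonneg (norm_nonneg l) t)
  rw [norm_mul, hw, ray]
  split_ifs
  · rw [norm_mul, norm_zpow, mul_zpow]
    nlinarith [le_max_left ‖c‖ ‖d‖]
  · rw [norm_mul, norm_zpow, mul_zpow]
    nlinarith [le_max_right ‖c‖ ‖d‖]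
  · simp

lemma norm_exp_I_mul_intCast (θ : ℂ) (t : ℤ) : ‖cexp (I * θ * t)‖ = Real.exp (-θ.im) ^ t := by
  rw [mul_comm, exp_int_mul, norm_zpow, norm_exp]
  simp

lemma memℓp_exp_mul_ray {θ : ℂ} (hρ : 1 < Real.exp (-θ.im) * ‖l‖) :
    Memℓp (fun t : ℤ => cexp (I * θ * t) * ray l hi mid c d t) 2 :=
  memℓp_mul_ray (norm_exp_I_mul_intCast θ) hρ

lemma memℓp_exp_neg_mul_ray {θ : ℂ} (hρ : 1 < Real.exp (-θ.im) * ‖l‖) :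
    Memℓp (fun t : ℤ => cexp (-(I * θ * t)) * ray l hi mid c d (-t)) 2 := by
  have h : Memℓp (fun t : ℤ => cexp (I * θ * t) * ray l hi mid c d t) 2 := memℓp_exp_mul_ray hρ
  simpa [Function.comp_def] using memℓp_comp_equiv (by norm_num) (Equiv.neg ℤ) h

end Ray

def dir (i : Chir) : Site := ![(1, 0), (-1, 0), (0, 1), (0, -1)] i

lemma ptWalk_apply (C : Site → Matrix Chir Chir ℂ) (u : Site → Chir → ℂ) (x : Site) (i : Chir) :
    ptWalk C u x i = ptCoin C u (x + dir i) i := by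
  obtain ⟨p, q⟩ := x
  fin_cases i <;> simp [ptWalk, ptShift, dir, sub_eq_add_neg]

lemma ptCoin_of_eq_one {C : Site → Matrix Chir Chir ℂ} {y : Site} (hC : C y = 1)
    (u : Site → Chir → ℂ) (i : Chir) : ptCoin C u y i = u y i := by
  simp [ptCoin, hC, Matrix.one_apply]

lemma IsShiftOp.apply_eq {S : H →L[ℂ] H} (hS : IsShiftOp S) (w : H) (x : Site) (i : Chir) :
    S w x i = w (x + dir i) i := by
  obtain ⟨p, q⟩ := x
  obtain ⟨h0, h1, h2, h3⟩ := hS w (p, q)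
  fin_cases i <;> simp [dir, h0, h1, h2, h3, sub_eq_add_neg]

/-- The diagonal of `D_x(θ)`. -/
def dWeight (θ : ℂ) (x : Site) : Chir → ℂ :=
  ![cexp (I * θ * x.1), cexp (-(I * θ * x.1)), cexp (I * θ * x.2), cexp (-(I * θ * x.2))]

/-- `D(θ) u`. -/
def translate (θ : ℂ) (u : Site → Chir → ℂ) (x : Site) : V :=
  WithLp.toLp 2 fun i => dWeight θ x i * u x i

lemma dWeight_ne_zero (θ : ℂ) (x : Site) (i : Chir) : dWeight θ x i ≠ 0 := by
  fin_cases i <;> exact exp_ne_zero _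

lemma dWeight_add_dir (θ : ℂ) (x : Site) (i : Chir) :
    dWeight θ (x + dir i) i = cexp (I * θ) * dWeight θ x i := by
  obtain ⟨p, q⟩ := x
  fin_cases i <;> simp [dWeight, dir, ← exp_add] <;> ring_nf

lemma transCoin_apply (θ : ℂ) (C : Site → Matrix Chir Chir ℂ) (x : Site) (i j : Chir) :
    transCoin θ C x i j = dWeight θ x i * C x i j * (dWeight θ x j)⁻¹ := by
  have hD : Dmat θ x = Matrix.diagonal (dWeight θ x) := rfl
  have hinv : (Dmat θ x)⁻¹ = Matrix.diagonal fun j => (dWeight θ x j)⁻¹ :=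
    Matrix.inv_eq_right_inv (by simp [hD, dWeight_ne_zero])
  rw [transCoin, hinv, hD, Matrix.mul_diagonal, Matrix.diagonal_mul]

lemma sum_transCoin_mul (θ : ℂ) (C : Site → Matrix Chir Chir ℂ) (u : Site → Chir → ℂ)
    (x : Site) (i : Chir) :
    ∑ j, transCoin θ C x i j * (dWeight θ x j * u x j) = dWeight θ x i * ptCoin C u x i := by
  simp only [transCoin_apply, ptCoin, Finset.mul_sum]
  refine Finset.sum_congr rfl fun j _ => ?_
  field_simp [dWeight_ne_zero θ x j]

theorem transWalkOp_translate {θ l : ℂ} {C : Site → Matrix Chir Chir ℂ} {u : Site → Chir → ℂ}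
    (hu : ∀ x i, ptWalk C u x i = l * u x i) {S M : H →L[ℂ] H} (hS : IsShiftOp S)
    (hM : IsCoinOp M (transCoin θ C)) (hmem : Memℓp (translate θ u) 2) :
    transWalkOp θ S M ⟨_, hmem⟩ = l • (⟨_, hmem⟩ : H) := by
  ext x i
  have hv (y : Site) (j : Chir) : (⟨_, hmem⟩ : H) y j = dWeight θ y j * u y j := rfl
  simp only [transWalkOp, smul_apply, ContinuousLinearMap.comp_apply, lp.coeFn_smul,
    Pi.smul_apply, PiLp.smul_apply, smul_eq_mul]
  rw [hS.apply_eq, hM, Finset.sum_congr rfl fun j _ => congrArg _ (hv _ j), sum_transCoin_mul,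
    dWeight_add_dir, ← ptWalk_apply, hu, hv]
  have h : cexp (-(I * θ)) * cexp (I * θ) = 1 := by rw [← exp_add, neg_add_cancel, exp_zero]
  linear_combination dWeight θ x i * l * u x i * h

theorem exists_eigenvector_of_ptWalk {θ l : ℂ} {C : Site → Matrix Chir Chir ℂ}
    {u : Site → Chir → ℂ} (hu : ∀ x i, ptWalk C u x i = l * u x i)
    (hmem : Memℓp (translate θ u) 2) {x₀ : Site} {i₀ : Chir} (hne : u x₀ i₀ ≠ 0)
    {S M : H →L[ℂ] H} (hS : IsShiftOp S) (hM : IsCoinOp M (transCoin θ C)) :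
    ∃ v : H, v ≠ 0 ∧ transWalkOp θ S M v = l • v := by
  refine ⟨⟨_, hmem⟩, fun h => ?_, transWalkOp_translate hu hS hM hmem⟩
  have : dWeight θ x₀ i₀ * u x₀ i₀ = 0 := congrArg (fun v : H => v x₀ i₀) h
  exact mul_ne_zero (dWeight_ne_zero θ x₀ i₀) hne this

/-- An outgoing solution of `U u = l u` for the walk with coin `C`: a wave running around the
rectangle through the corners `(0,0) → (0,n) → (m,n) → (m,0) → (0,0)`, normalised to `1` at
`(0,0)` in chirality `←` and picking up the coin entry at each corner, together with the
geometric tails that leak out of the corners along the four lines through them. -/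
def resonantState (m n : ℤ) (C : Site → Matrix Chir Chir ℂ) (l : ℂ) : Site → Chir → ℂ := fun x =>
  ![if x.2 = 0 then ray l (m - 1) 0 1 (C (0, 0) 0 0) x.1
      else if x.2 = n then ray l (-1) 0 0 (l ^ (-n) * C (0, 0) 3 0 * C (0, n) 0 3) x.1 else 0,
    if x.2 = n then ray l (-1) (-m) (l ^ (-n) * C (0, 0) 3 0 * C (0, n) 1 3)
        (l ^ (-n) * C (0, 0) 3 0 * C (0, n) 1 3 * C (m, n) 1 1) (-x.1)
      else if x.2 = 0 then ray l (-(m + 1)) 0 0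
        (l ^ (-(2 * n)) * C (0, 0) 3 0 * C (0, n) 1 3 * C (m, n) 2 1 * C (m, 0) 1 2) (-x.1)
      else 0,
    if x.1 = m then
        ray l (n - 1) 0 (l ^ (-(m + 2 * n)) * C (0, 0) 3 0 * C (0, n) 1 3 * C (m, n) 2 1)
          (l ^ (-(m + 2 * n)) * C (0, 0) 3 0 * C (0, n) 1 3 * C (m, n) 2 1 * C (m, 0) 2 2) x.2
      else if x.1 = 0 then ray l (-1) 0 0 (C (0, 0) 2 0) x.2 else 0,
    if x.1 = 0 then ray l (-1) (-n) (C (0, 0) 3 0) (C (0, 0) 3 0 * C (0, n) 3 3) (-x.2)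
      else if x.1 = m then
        ray l (-(n + 1)) 0 0 (l ^ (-m) * C (0, 0) 3 0 * C (0, n) 1 3 * C (m, n) 3 1) (-x.2)
      else 0]

section ResonantState

variable {m n : ℤ} {C : Site → Matrix Chir Chir ℂ} {l : ℂ}

lemma resonantState_zero_zero (hm : 1 ≤ m) : resonantState m n C l (0, 0) 0 = 1 := by
  simp [resonantState, ray_of_le_of_le (by omega : (0 : ℤ) ≤ m - 1) le_rfl]

lemma resonantState_eq_mul_of_notMem_corners (hm : 1 ≤ m) (hn : 1 ≤ n) (hl : l ≠ 0) {y : Site}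
    (hy : y ∉ corners m n) (i : Chir) :
    resonantState m n C l y i = l * resonantState m n C l (y - dir i) i := by
  obtain ⟨p, q⟩ := y
  simp only [corners, Set.mem_insert_iff, Set.mem_singleton_iff, Prod.mk.injEq, not_or] at hy
  fin_cases i <;> simp [resonantState, dir] <;> split_ifs <;>
    first | rfl | exact ray_eq_mul_ray hl (by omega) (by omega) (by omega)

/- At a corner the state is a single chirality, and the four outgoing amplitudes must reproduce
the corresponding column of the coin; the vanishing entries rule out leaks back along the edges
of the rectangle, and the equation for `←` at `(m, 0)` closes the loop, which is where `hc`
enters. -/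
lemma ptCoin_resonantState_of_mem_corners (hm : 1 ≤ m) (hn : 1 ≤ n) (hl : l ≠ 0)
    (hz₁ : C (0, 0) 1 0 = 0) (hz₂ : C (m, 0) 3 2 = 0) (hz₃ : C (m, n) 0 1 = 0)
    (hz₄ : C (0, n) 2 3 = 0) (hc : l ^ (2 * (m + n)) = cPlus m n C) {y : Site}
    (hy : y ∈ corners m n) (i : Chir) :
    ptCoin C (resonantState m n C l) y i = l * resonantState m n C l (y - dir i) i := by
  simp only [cPlus, two_mul, zpow_add₀ hl] at hc
  simp only [corners, Set.mem_insert_iff, Set.mem_singleton_iff] at hy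
  rcases hy with rfl | rfl | rfl | rfl <;> fin_cases i <;>
    simp (disch := omega) [ptCoin, Fin.sum_univ_four, resonantState, dir, ray, hz₁, hz₂, hz₃,
      hz₄, if_pos, if_neg] <;>
    (try simp only [two_mul, zpow_add₀ hl, zpow_sub₀ hl, zpow_neg, zpow_one]) <;> field_simp
  linear_combination -hc

theorem ptWalk_resonantState (hm : 1 ≤ m) (hn : 1 ≤ n) (hl : l ≠ 0)
    (hoff : ∀ x, x ∉ corners m n → C x = 1) (hz₁ : C (0, 0) 1 0 = 0)
    (hz₂ : C (m, 0) 3 2 = 0) (hz₃ : C (m, n) 0 1 = 0) (hz₄ : C (0, n) 2 3 = 0)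
    (hc : l ^ (2 * (m + n)) = cPlus m n C) (x : Site) (i : Chir) :
    ptWalk C (resonantState m n C l) x i = l * resonantState m n C l x i := by
  obtain ⟨y, rfl⟩ : ∃ y, x = y - dir i := ⟨x + dir i, by simp⟩
  rw [ptWalk_apply, sub_add_cancel]
  by_cases hy : y ∈ corners m n
  · exact ptCoin_resonantState_of_mem_corners hm hn hl hz₁ hz₂ hz₃ hz₄ hc hy i
  · rw [ptCoin_of_eq_one (hoff y hy)]
    exact resonantState_eq_mul_of_notMem_corners hm hn hl hy i

theorem memℓp_translate_resonantState (hm : 1 ≤ m) (hn : 1 ≤ n) {θ : ℂ}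
    (hρ : 1 < Real.exp (-θ.im) * ‖l‖) : Memℓp (translate θ (resonantState m n C l)) 2 := by
  have hm0 : m ≠ 0 := by omega
  have hn0 : n ≠ 0 := by omega
  refine memℓp_toLp_of_forall fun i => ?_
  fin_cases i <;> simp only [resonantState, dWeight]
  · refine memℓp_of_rows (β := ℤ) (by norm_num) {0, n} (fun x hx => by simp_all) fun b hb => ?_
    simp only [Finset.mem_insert, Finset.mem_singleton] at hb
    rcases hb with hb | hb <;> simp [hb, hn0, hn0.symm] <;> exact memℓp_exp_mul_ray hρ
  · refine memℓp_of_rows (β := ℤ) (by norm_num) {n, 0} (fun x hx => by simp_all) fun b hb => ?_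
    simp only [Finset.mem_insert, Finset.mem_singleton] at hb
    rcases hb with hb | hb <;> simp [hb, hn0, hn0.symm] <;> exact memℓp_exp_neg_mul_ray hρ
  · refine memℓp_of_cols (α := ℤ) (by norm_num) {m, 0} (fun x hx => by simp_all) fun b hb => ?_
    simp only [Finset.mem_insert, Finset.mem_singleton] at hb
    rcases hb with hb | hb <;> simp [hb, hm0, hm0.symm] <;> exact memℓp_exp_mul_ray hρ
  · refine memℓp_of_cols (α := ℤ) (by norm_num) {0, m} (fun x hx => by simp_all) fun b hb => ?_
    simp only [Finset.mem_insert, Finset.mem_singleton] at hb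
    rcases hb with hb | hb <;> simp [hb, hm0, hm0.symm] <;> exact memℓp_exp_neg_mul_ray hρ

end ResonantState

lemma one_lt_exp_neg_im_mul_norm_exp {θ κ : ℂ} (h : θ.im < κ.im) :
    1 < Real.exp (-θ.im) * ‖cexp (-(I * κ))‖ := by
  rw [norm_exp, ← Real.exp_add, Real.one_lt_exp_iff]
  simp only [neg_re, mul_re, I_re, zero_mul, I_im, one_mul, zero_sub, neg_neg]
  linarith

theorem exists_eigenvector_of_cPlus {m n : ℤ} (hm : 1 ≤ m) (hn : 1 ≤ n)
    {C : Site → Matrix Chir Chir ℂ} (hoff : ∀ x, x ∉ corners m n → C x = 1)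
    (hz₁ : C (0, 0) 1 0 = 0) (hz₂ : C (m, 0) 3 2 = 0) (hz₃ : C (m, n) 0 1 = 0)
    (hz₄ : C (0, n) 2 3 = 0) {θ κ : ℂ} (hκ : cexp (-(I * κ)) ^ (2 * (m + n)) = cPlus m n C)
    (hθκ : θ.im < κ.im) {S M : H →L[ℂ] H} (hS : IsShiftOp S) (hM : IsCoinOp M (transCoin θ C)) :
    ∃ u : H, u ≠ 0 ∧ transWalkOp θ S M u = cexp (-(I * κ)) • u :=
  exists_eigenvector_of_ptWalk
    (ptWalk_resonantState hm hn (exp_ne_zero _) hoff hz₁ hz₂ hz₃ hz₄ hκ)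
    (memℓp_translate_resonantState hm hn (one_lt_exp_neg_im_mul_norm_exp hθκ))
    ((resonantState_zero_zero hm).trans_ne one_ne_zero) hS hM

/-- Reflection in the diagonal relabels the chiralities `← ↔ ↓`, `→ ↔ ↑`. -/
def swapChir : Chir → Chir := ![2, 3, 0, 1]

def transposeCoin (C : Site → Matrix Chir Chir ℂ) (x : Site) : Matrix Chir Chir ℂ :=
  (C x.swap).submatrix swapChir swapChir

def transposeState (u : Site → Chir → ℂ) (x : Site) (i : Chir) : ℂ := u x.swap (swapChir i)

lemma swap_add_dir (x : Site) (i : Chir) : (x + dir i).swap = x.swap + dir (swapChir i) := by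
  fin_cases i <;> rfl

lemma dWeight_swap (θ : ℂ) (x : Site) (i : Chir) :
    dWeight θ x.swap (swapChir i) = dWeight θ x i := by
  fin_cases i <;> rfl

lemma transposeCoin_transposeCoin (C : Site → Matrix Chir Chir ℂ) :
    transposeCoin (transposeCoin C) = C := by
  funext x
  ext i j
  fin_cases i <;> fin_cases j <;> rfl

lemma transposeCoin_eq_one {C : Site → Matrix Chir Chir ℂ} {x : Site} (h : C x.swap = 1) :
    transposeCoin C x = 1 := by
  ext i j
  rw [transposeCoin, h]
  fin_cases i <;> fin_cases j <;> rfl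

lemma swap_mem_corners {m n : ℤ} {x : Site} : x.swap ∈ corners m n ↔ x ∈ corners n m := by
  obtain ⟨p, q⟩ := x
  simp only [corners, Set.mem_insert_iff, Set.mem_singleton_iff, Prod.swap_prod_mk,
    Prod.mk.injEq]
  tauto

lemma cPlus_transposeCoin (m n : ℤ) (C : Site → Matrix Chir Chir ℂ) :
    cPlus n m (transposeCoin C) = cMinus m n C := by
  simp [cPlus, cMinus, transposeCoin, swapChir]
  ring

lemma ptWalk_transposeState {C : Site → Matrix Chir Chir ℂ} {u : Site → Chir → ℂ} {l : ℂ}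
    (hu : ∀ x i, ptWalk C u x i = l * u x i) (x : Site) (i : Chir) :
    ptWalk (transposeCoin C) (transposeState u) x i = l * transposeState u x i := by
  rw [ptWalk_apply, transposeState, ← hu, ptWalk_apply, ← swap_add_dir]
  simp only [ptCoin, transposeCoin, transposeState, Matrix.submatrix_apply, Fin.sum_univ_four]
  fin_cases i <;> simp [swapChir] <;> ring

lemma memℓp_translate_transposeState {θ : ℂ} {u : Site → Chir → ℂ}
    (hu : Memℓp (translate θ u) 2) : Memℓp (translate θ (transposeState u)) 2 := by
  refine (memℓp_comp_equiv (by norm_num) (Equiv.prodComm ℤ ℤ) hu).mono' fun x => le_of_eq ?_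
  simp only [translate, EuclideanSpace.norm_eq, Function.comp_apply, Equiv.prodComm_apply,
    transposeState, Fin.sum_univ_four]
  rw [← dWeight_swap θ x 0, ← dWeight_swap θ x 1, ← dWeight_swap θ x 2, ← dWeight_swap θ x 3]
  simp [swapChir]
  ring_nf

/- Reflection in the diagonal maps the four-corner walk on the `m × n` rectangle to the one on
the `n × m` rectangle and reverses the orientation of the loop, so `c⁻` becomes `c⁺`. -/
theorem exists_eigenvector_of_cMinus {m n : ℤ} (hm : 1 ≤ m) (hn : 1 ≤ n)
    {C : Site → Matrix Chir Chir ℂ} (hoff : ∀ x, x ∉ corners m n → C x = 1)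
    (hz₁ : C (0, 0) 3 2 = 0) (hz₂ : C (0, n) 1 0 = 0) (hz₃ : C (m, n) 2 3 = 0)
    (hz₄ : C (m, 0) 0 1 = 0) {θ κ : ℂ} (hκ : cexp (-(I * κ)) ^ (2 * (m + n)) = cMinus m n C)
    (hθκ : θ.im < κ.im) {S M : H →L[ℂ] H} (hS : IsShiftOp S) (hM : IsCoinOp M (transCoin θ C)) :
    ∃ u : H, u ≠ 0 ∧ transWalkOp θ S M u = cexp (-(I * κ)) • u := by
  have hoff' (x : Site) (hx : x ∉ corners n m) : transposeCoin C x = 1 :=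
    transposeCoin_eq_one (hoff _ (swap_mem_corners.not.mpr hx))
  have hκ' : cexp (-(I * κ)) ^ (2 * (n + m)) = cPlus n m (transposeCoin C) := by
    rw [cPlus_transposeCoin, add_comm, hκ]
  have hu := ptWalk_transposeState
    (ptWalk_resonantState hn hm (exp_ne_zero _) hoff' hz₁ hz₂ hz₃ hz₄ hκ')
  rw [transposeCoin_transposeCoin] at hu
  exact exists_eigenvector_of_ptWalk hu (memℓp_translate_transposeState
      (memℓp_translate_resonantState hn hm (one_lt_exp_neg_im_mul_norm_exp hθκ)))
    (x₀ := (0, 0)) (i₀ := 2) ((resonantState_zero_zero hn).trans_ne one_ne_zero) hS hM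

lemma norm_mul_sub_one_le {R : Type*} [SeminormedRing R] {a b : R} (hb : ‖b‖ ≤ 1) :
    ‖a * b - 1‖ ≤ ‖a - 1‖ + ‖b - 1‖ :=
  calc ‖a * b - 1‖ = ‖(a - 1) * b + (b - 1)‖ := by congr 1; noncomm_ring
    _ ≤ ‖(a - 1) * b‖ + ‖b - 1‖ := norm_add_le _ _
    _ ≤ ‖a - 1‖ + ‖b - 1‖ := by
      gcongr; exact (norm_mul_le _ _).trans (mul_le_of_le_one_right (norm_nonneg _) hb)

lemma norm_mul_mul_mul_sub_one_lt {R : Type*} [SeminormedRing R] {a b c d : R} {ε : ℝ}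
    (hb : ‖b‖ ≤ 1) (hc : ‖c‖ ≤ 1) (hd : ‖d‖ ≤ 1) (ha' : ‖a - 1‖ < ε) (hb' : ‖b - 1‖ < ε)
    (hc' : ‖c - 1‖ < ε) (hd' : ‖d - 1‖ < ε) : ‖a * b * c * d - 1‖ < 4 * ε := by
  have h₁ := norm_mul_sub_one_le (a := a) hb
  have h₂ := norm_mul_sub_one_le (a := a * b) hc
  have h₃ := norm_mul_sub_one_le (a := a * b * c) hd
  linarith

theorem IsPerturbedFourCorner.norm_cPlus_sub_one_lt_and_norm_cMinus_sub_one_lt {m n : ℤ}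
    (hm : 1 ≤ m) (hn : 1 ≤ n) {ε : ℝ} {C : Site → Matrix Chir Chir ℂ}
    (hC : IsPerturbedFourCorner m n ε C) :
    ‖cPlus m n C - 1‖ < 4 * ε ∧ ‖cMinus m n C - 1‖ < 4 * ε := by
  obtain ⟨hU, -, hnear, -⟩ := hC
  have hle (x : Site) (i j : Chir) : ‖C x i j‖ ≤ 1 := entry_norm_bound_of_unitary (hU x) i j
  have near (x : Site) (hx : x ∈ corners m n) (i j : Chir) (h : fourCornerCoin m n x i j = 1) :
      ‖C x i j - 1‖ < ε := h ▸ hnear x hx i j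
  have c₁ := near (0, 0) (by simp [corners])
  have c₂ := near (m, 0) (by simp [corners])
  have c₃ := near (m, n) (by simp [corners])
  have c₄ := near (0, n) (by simp [corners])
  have hm0 : m ≠ 0 := by omega
  have hn0 : n ≠ 0 := by omega
  simp only [fourCornerCoin, Prod.mk.injEq, hm0, hn0, hm0.symm, and_true, true_and, and_self,
    if_true, if_false] at c₁ c₂ c₃ c₄
  exact ⟨norm_mul_mul_mul_sub_one_lt (hle _ _ _) (hle _ _ _) (hle _ _ _)
      (c₁ 3 0 rfl) (c₂ 0 2 rfl) (c₃ 2 1 rfl) (c₄ 1 3 rfl),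
    norm_mul_mul_mul_sub_one_lt (hle _ _ _) (hle _ _ _) (hle _ _ _)
      (c₁ 1 2 rfl) (c₂ 3 1 rfl) (c₃ 0 3 rfl) (c₄ 2 0 rfl)⟩

theorem exists_exp_zpow_eq {M : ℤ} (hM : 0 < M) (k : ℤ) {c : ℂ} (hc : ‖c - 1‖ ≤ 1 / 2) :
    ∃ κ : ℂ, cexp (-(I * κ)) ^ (2 * M) = c ∧ ‖κ - Real.pi * k / M‖ ≤ 3 / 2 * ‖c - 1‖ := by
  have hM' : (M : ℂ) ≠ 0 := by exact_mod_cast hM.ne'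
  have hc0 : c ≠ 0 := by
    rintro rfl
    norm_num at hc
  refine ⟨Real.pi * k / M + I * log c / (2 * M), ?_, ?_⟩
  · have h : ((2 * M : ℤ) : ℂ) * -(I * (Real.pi * k / M + I * log c / (2 * M))) =
        log c + (-k : ℤ) * (2 * Real.pi * I) := by
      push_cast
      field_simp
      ring_nf
      simp [I_sq]
    rw [← exp_int_mul, h, exp_add, exp_log hc0, exp_int_mul_two_pi_mul_I, mul_one]
  · have hlog := norm_log_one_add_half_le_self (z := c - 1) (by simpa using hc)
    rw [add_sub_cancel] at hlog
    have hM1 : (1 : ℝ) ≤ 2 * M := by exact_mod_cast (by omega : (1 : ℤ) ≤ 2 * M)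
    calc ‖Real.pi * k / M + I * log c / (2 * M) - Real.pi * k / M‖ = ‖log c‖ / (2 * M) := by
          rw [add_sub_cancel_left, norm_div, norm_mul, norm_I, one_mul]
          norm_cast
          rw [abs_of_pos (by omega)]
      _ ≤ ‖log c‖ := div_le_self (norm_nonneg _) hM1
      _ ≤ 3 / 2 * ‖c - 1‖ := hlog

theorem exists_exp_zpow_eq_of_norm_sub_one_lt {M : ℤ} (hM : 0 < M) (k : ℤ) {θ : ℂ} {ε : ℝ}
    (hε : ε ≤ 1 / 8) (hεθ : 6 * ε ≤ -θ.im) {c : ℂ} (hc : ‖c - 1‖ < 4 * ε) :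
    ∃ κ : ℂ, cexp (-(I * κ)) ^ (2 * M) = c ∧ θ.im < κ.im ∧
      ‖κ - Real.pi * k / M‖ < 6 * ε := by
  obtain ⟨κ, hκ, hdist⟩ := exists_exp_zpow_eq hM k (c := c) (by linarith)
  have hdist' : ‖κ - Real.pi * k / M‖ < 6 * ε := by linarith
  refine ⟨κ, hκ, ?_, hdist'⟩
  have him := abs_im_le_norm (κ - ((Real.pi * k / M : ℝ) : ℂ))
  rw [sub_im, ofReal_im, sub_zero] at him
  push_cast at him
  linarith [neg_abs_le κ.im]

/-- stability of the eigenvalues of the conjugated operator `U_ε(θ)` for a family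
of perturbed four-corner quantum walks: for small `ε` there are eigenvalues `e^{−iκ^±_{k,ε}}`
with `κ^±_{k,ε}` within `rε` (mod `2π`) of `πk/(m₀+n₀)`. -/
theorem fourCorner_translated_eigenvalue_stability
    (m₀ n₀ : ℤ) (hm : 1 ≤ m₀) (hn : 1 ≤ n₀)
    (Cfam : ℝ → Site → Matrix Chir Chir ℂ)
    (hfam : ∀ ε : ℝ, 0 < ε → ε ≤ 1 → IsPerturbedFourCorner m₀ n₀ ε (Cfam ε))
    (θ : ℂ) (hθ : θ.im < 0)
    (S : H →L[ℂ] H) (hS : IsShiftOp S)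
    (Mfam : ℝ → (H →L[ℂ] H))
    (hMfam : ∀ ε : ℝ, 0 < ε → ε ≤ 1 → IsCoinOp (Mfam ε) (transCoin θ (Cfam ε))) :
    ∃ ε₀ r : ℝ, 0 < ε₀ ∧ ε₀ ≤ 1 ∧ 0 < r ∧
      ∀ ε : ℝ, 0 < ε → ε ≤ ε₀ → ∀ k : ℕ, (k : ℤ) < 2 * (m₀ + n₀) →
        ∃ κp κm : ℂ, θ.im < κp.im ∧ θ.im < κm.im ∧
          (∃ n : ℤ, ‖κp - (Real.pi : ℂ) * (k : ℂ) / ((m₀ : ℂ) + (n₀ : ℂ))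
            - 2 * (Real.pi : ℂ) * (n : ℂ)‖ < r * ε) ∧
          (∃ n : ℤ, ‖κm - (Real.pi : ℂ) * (k : ℂ) / ((m₀ : ℂ) + (n₀ : ℂ))
            - 2 * (Real.pi : ℂ) * (n : ℂ)‖ < r * ε) ∧
          (∃ u : H, u ≠ 0 ∧
            (transWalkOp θ S (Mfam ε)) u = Complex.exp (-(Complex.I * κp)) • u) ∧
          (∃ u : H, u ≠ 0 ∧
            (transWalkOp θ S (Mfam ε)) u = Complex.exp (-(Complex.I * κm)) • u) := by
  refine ⟨min (1 / 8) (-θ.im / 6), 6, lt_min (by norm_num) (by linarith),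
    (min_le_left _ _).trans (by norm_num), by norm_num, fun ε hε hε₀ k _ => ?_⟩
  have hε₁ : ε ≤ 1 := hε₀.trans ((min_le_left _ _).trans (by norm_num))
  have hε₈ : ε ≤ 1 / 8 := hε₀.trans (min_le_left _ _)
  have hεθ : 6 * ε ≤ -θ.im := by linarith [hε₀.trans (min_le_right _ _)]
  have hC := hfam ε hε hε₁
  obtain ⟨hcp, hcm⟩ := hC.norm_cPlus_sub_one_lt_and_norm_cMinus_sub_one_lt hm hn
  obtain ⟨-, hoff, -, z₁, z₂, z₃, z₄, z₅, z₆, z₇, z₈⟩ := hC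
  obtain ⟨κp, hκp, hθp, hdp⟩ :=
    exists_exp_zpow_eq_of_norm_sub_one_lt (by omega : 0 < m₀ + n₀) k hε₈ hεθ hcp
  obtain ⟨κm, hκm, hθm, hdm⟩ :=
    exists_exp_zpow_eq_of_norm_sub_one_lt (by omega : 0 < m₀ + n₀) k hε₈ hεθ hcm
  push_cast at hdp hdm
  exact ⟨κp, κm, hθp, hθm, ⟨0, by simpa using hdp⟩, ⟨0, by simpa using hdm⟩,
    exists_eigenvector_of_cPlus hm hn hoff z₁ z₃ z₆ z₈ hκp hθp hS (hMfam ε hε hε₁),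
    exists_eigenvector_of_cMinus hm hn hoff z₂ z₇ z₅ z₄ hκm hθm hS (hMfam ε hε hε₁)⟩

end QWPaper
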